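/- Let (X, Y, ⟨·,·⟩) be a dual pairing and h : X → ℝ̄ with Graph(∂h) ≠ ∅. Define h^∪(x) := sup{⟨x-u, y⟩ + h(u) : (u,y) ∈ Graph(∂h)}. Then h^∪ ≤ h** pointwise, and h^∪(x) = h**(x) = h(x) for every x ∈ D(∂h). -/
import Mathlib


variable {X Y : Type*} [AddCommGroup X] [Module ℝ X] [AddCommGroup Y] [Module ℝ Y]

/-- `y` is a subgradient of `h : X → ℝ̄` at `x`. -/
def IsSubgrad (b : X →ₗ[ℝ] Y →ₗ[ℝ] ℝ) (h : X → EReal) (x : X) (y : Y) : Prop :=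
  ∃ s : ℝ, h x = (s : EReal) ∧ ∀ w : X, ((b (w - x) y : ℝ) : EReal) + (s : EReal) ≤ h w

/-- The convex conjugate `h*`. -/
noncomputable def conj (b : X →ₗ[ℝ] Y →ₗ[ℝ] ℝ) (h : X → EReal) (y : Y) : EReal :=
  ⨆ x : X, (((b x y : ℝ) : EReal) - h x)

/-- The biconjugate `h**`. -/
noncomputable def biconj (b : X →ₗ[ℝ] Y →ₗ[ℝ] ℝ) (h : X → EReal) (x : X) : EReal :=
  ⨆ y : Y, (((b x y : ℝ) : EReal) - conj b h y)

/-- `h^∪(x) = sup{⟨x-u,y⟩ + h(u) : (u,y) ∈ Graph ∂h}`. -/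
noncomputable def hcup (b : X →ₗ[ℝ] Y →ₗ[ℝ] ℝ) (h : X → EReal) (x : X) : EReal :=
  sSup {r : EReal | ∃ u : X, ∃ y : Y, IsSubgrad b h u y ∧
    r = ((b (x - u) y : ℝ) : EReal) + h u}

lemma conj_of_subgrad (b : X →ₗ[ℝ] Y →ₗ[ℝ] ℝ) (h : X → EReal) {u : X} {y : Y} {s : ℝ}
    (hs : h u = (s : EReal)) (hsub : ∀ w : X, ((b (w - u) y : ℝ) : EReal) + (s : EReal) ≤ h w) :
    conj b h y = ((b u y - s : ℝ) : EReal) := by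
  apply le_antisymm
  · apply iSup_le
    intro w
    have hw := hsub w
    generalize hhw : h w = v at hw ⊢
    induction v using EReal.rec with
    | bot =>
      rw [← EReal.coe_add] at hw
      exact absurd (le_bot_iff.mp hw) (EReal.coe_ne_bot _)
    | coe t =>
      rw [← EReal.coe_add, EReal.coe_le_coe_iff] at hw
      rw [← EReal.coe_sub, EReal.coe_le_coe_iff]
      have : b (w - u) y = b w y - b u y := by rw [map_sub]; simp
      rw [this] at hw
      linarith
    | top => simp
  · have : ((b u y - s : ℝ) : EReal) = ((b u y : ℝ) : EReal) - h u := by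
      rw [hs, ← EReal.coe_sub]
    rw [this]
    exact le_iSup (fun w : X => ((b w y : ℝ) : EReal) - h w) u

lemma term_le_self (b : X →ₗ[ℝ] Y →ₗ[ℝ] ℝ) (h : X → EReal) (x : X) (y : Y) :
    ((b x y : ℝ) : EReal) - conj b h y ≤ h x := by
  have h1 : ((b x y : ℝ) : EReal) - h x ≤ conj b h y :=
    le_iSup (fun w : X => ((b w y : ℝ) : EReal) - h w) x
  generalize hc : conj b h y = c at h1 ⊢
  induction c using EReal.rec with
  | bot =>
    generalize hx : h x = t at h1 ⊢
    induction t using EReal.rec with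
    | bot =>
      exfalso
      simp at h1
    | coe t =>
      rw [← EReal.coe_sub] at h1
      exact absurd (le_bot_iff.mp h1) (EReal.coe_ne_bot _)
    | top => simp
  | coe c =>
    generalize hx : h x = t at h1 ⊢
    induction t using EReal.rec with
    | bot =>
      exfalso
      simp at h1
    | coe t =>
      rw [← EReal.coe_sub, EReal.coe_le_coe_iff] at h1
      rw [← EReal.coe_sub, EReal.coe_le_coe_iff]
      linarith
    | top => simp
  | top =>
    generalize hx : h x = t at h1 ⊢
    induction t using EReal.rec with
    | bot => simp [EReal.sub_top]
    | coe t => simp [EReal.sub_top]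
    | top => simp

/-- If `Graph(∂h) ≠ ∅`, then `h^∪ ≤ h**` pointwise, and
`h^∪(x) = h**(x) = h(x)` for every `x ∈ D(∂h)`. -/
theorem hcup_le_biconj_and_eq_on_dom (b : X →ₗ[ℝ] Y →ₗ[ℝ] ℝ) (h : X → EReal)
    (hne : ∃ u : X, ∃ y : Y, IsSubgrad b h u y) :
    (∀ x : X, hcup b h x ≤ biconj b h x) ∧
      ∀ x : X, (∃ y : Y, IsSubgrad b h x y) →
        hcup b h x = biconj b h x ∧ biconj b h x = h x := by
  have hle : ∀ x : X, hcup b h x ≤ biconj b h x := by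
    intro x
    apply sSup_le
    rintro r ⟨u, y, ⟨s, hs, hsub⟩, rfl⟩
    have hc := conj_of_subgrad b h hs hsub
    have heq : ((b (x - u) y : ℝ) : EReal) + h u
        = ((b x y : ℝ) : EReal) - conj b h y := by
      rw [hc, hs, ← EReal.coe_add, ← EReal.coe_sub, EReal.coe_eq_coe_iff,
        map_sub]
      simp
      ring
    rw [heq]
    exact le_iSup (fun y : Y => ((b x y : ℝ) : EReal) - conj b h y) y
  refine ⟨hle, ?_⟩
  rintro x ⟨y₀, s₀, hs₀, hsub₀⟩
  have hb_le : biconj b h x ≤ h x := iSup_le fun y => term_le_self b h x y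
  have hb_ge : h x ≤ biconj b h x := by
    have hc := conj_of_subgrad b h hs₀ hsub₀
    have heq : ((b x y₀ : ℝ) : EReal) - conj b h y₀ = h x := by
      rw [hc, hs₀, ← EReal.coe_sub, EReal.coe_eq_coe_iff]
      ring
    rw [← heq]
    exact le_iSup (fun y : Y => ((b x y : ℝ) : EReal) - conj b h y) y₀
  have hbe : biconj b h x = h x := le_antisymm hb_le hb_ge
  have hcup_ge : h x ≤ hcup b h x := by
    apply le_sSup
    exact ⟨x, y₀, ⟨s₀, hs₀, hsub₀⟩, by simp⟩
  exact ⟨le_antisymm (hle x) (hbe ▸ hcup_ge), hbe⟩
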